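/- (Main theorem / Theorem 2 of the paper.) Let Â ∈ ℝ^{m×n}, X_opt an h-dimensional subspace with D̂ = P_opt(Â), and let Δ̂_max and Δ̂_min be the largest and h-th largest singular values of D̂. Let X_LSI be the span of the first h left singular vectors of Â, and let ε̂₀ = ‖(Â − D̂)ᵀ(Â − D̂)‖₂. If Δ̂_min > sqrt(ε̂₀), then ‖tan Θ(X_LSI, X_opt)‖₂ ≤ (Δ̂_max/Δ̂_min) · (sqrt(ε̂₀)/Δ̂_min) / (1 − (sqrt(ε̂₀)/Δ̂_min)²). -/

import Mathlib

/-!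
Projecting onto `X_opt` does not increase singular values (a Weyl-type monotonicity, proved by a
dimension count on eigenvectors), so `σ_h(Â) ≥ Δ̂_min`. Every `U v` is then `Â y` with
`Δ̂_min² ‖y‖² ≤ ‖v‖²`, and its component orthogonal to `X_opt` is `(Â - D̂) y`, of squared norm at
most `ε̂₀ ‖y‖²`. Hence every cosine of a canonical angle is at least `√(1 - ε̂₀ / Δ̂_min²)`, which
gives the tangent bound.
-/

open scoped BigOperators
open Matrix

noncomputable def frobNorm {r s : ℕ} (M : Matrix (Fin r) (Fin s) ℝ) : ℝ :=
  Real.sqrt (∑ i, ∑ j, M i j ^ 2)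

noncomputable def specNorm {r s : ℕ} (M : Matrix (Fin r) (Fin s) ℝ) : ℝ :=
  sSup {c : ℝ | ∃ x : Fin s → ℝ, (∑ j, x j ^ 2) = 1 ∧
    c = Real.sqrt (∑ i, (M.mulVec x i) ^ 2)}

/-- `σ` enumerates the singular values of `M` in nonincreasing order,
    padded with zeros beyond index `s`. -/
def IsSingularValues {r s : ℕ} (M : Matrix (Fin r) (Fin s) ℝ) (σ : ℕ → ℝ) : Prop :=
  Antitone σ ∧ (∀ i, 0 ≤ σ i) ∧ (∀ i, s ≤ i → σ i = 0) ∧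
  ∀ hH : (Mᵀ * M).IsHermitian,
    Multiset.map (fun i : Fin s => σ (i : ℕ) ^ 2) Finset.univ.val
      = Multiset.map hH.eigenvalues Finset.univ.val

namespace Matrix

theorem isHermitian_transpose_mul_self {m n : Type*} [Fintype m] (A : Matrix m n ℝ) :
    (Aᵀ * A).IsHermitian := by
  simpa using isHermitian_conjTranspose_mul_self A

variable {m n k k' : Type*} [Fintype m] [Fintype n] [Fintype k] [Fintype k']

theorem dotProduct_transpose_mul_self_mulVec (A : Matrix m n ℝ) (x : n → ℝ) :
    x ⬝ᵥ ((Aᵀ * A) *ᵥ x) = (A *ᵥ x) ⬝ᵥ (A *ᵥ x) := by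
  rw [← mulVec_mulVec, dotProduct_mulVec, vecMul_transpose, dotProduct_comm]

theorem exists_ne_zero_forall_dotProduct_eq_zero (w : m → n → ℝ)
    (h : Fintype.card m < Fintype.card n) : ∃ x ≠ 0, ∀ i, w i ⬝ᵥ x = 0 := by
  have hker := LinearMap.ker_ne_bot_of_finrank_lt (f := (of w).mulVecLin) (by simpa using h)
  obtain ⟨x, hx, hx0⟩ := (Submodule.ne_bot_iff _).1 hker
  exact ⟨x, hx0, fun i => congrFun hx i⟩

section OrthonormalColumns

variable [DecidableEq k] [DecidableEq k'] {X : Matrix m k' ℝ} {U : Matrix m k ℝ}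

theorem mulVec_dotProduct_mulVec_of_transpose_mul_self (hX : Xᵀ * X = 1) (v w : k' → ℝ) :
    (X *ᵥ v) ⬝ᵥ (X *ᵥ w) = v ⬝ᵥ w := by
  rw [dotProduct_mulVec, ← mulVec_transpose, mulVec_mulVec, hX, one_mulVec]

theorem dotProduct_self_eq_add_of_transpose_mul_self (hX : Xᵀ * X = 1) (y : m → ℝ) :
    y ⬝ᵥ y = (Xᵀ *ᵥ y) ⬝ᵥ (Xᵀ *ᵥ y) + (y - X *ᵥ (Xᵀ *ᵥ y)) ⬝ᵥ (y - X *ᵥ (Xᵀ *ᵥ y)) := by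
  have hcross : y ⬝ᵥ (X *ᵥ (Xᵀ *ᵥ y)) = (Xᵀ *ᵥ y) ⬝ᵥ (Xᵀ *ᵥ y) := by
    rw [dotProduct_mulVec, ← mulVec_transpose]
  simp only [sub_dotProduct, dotProduct_sub, mulVec_dotProduct_mulVec_of_transpose_mul_self hX,
    dotProduct_comm _ y, hcross]
  ring

theorem mul_transpose_mul_mulVec_dotProduct_le (hX : Xᵀ * X = 1) (A : Matrix m n ℝ)
    (v : n → ℝ) : ((X * Xᵀ * A) *ᵥ v) ⬝ᵥ ((X * Xᵀ * A) *ᵥ v) ≤ (A *ᵥ v) ⬝ᵥ (A *ᵥ v) := by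
  rw [← mulVec_mulVec, ← mulVec_mulVec, mulVec_dotProduct_mulVec_of_transpose_mul_self hX,
    dotProduct_self_eq_add_of_transpose_mul_self hX (A *ᵥ v)]
  exact le_add_of_nonneg_right (Finset.sum_nonneg fun _ _ => mul_self_nonneg _)

theorem exists_preimage_of_mul_transpose_mul_eq_mul_diagonal (hU : Uᵀ * U = 1)
    {A : Matrix m n ℝ} {d : k → ℝ} (hUd : A * Aᵀ * U = U * diagonal d) {c : ℝ} (hc : 0 < c)
    (hd : ∀ j, c ≤ d j) (v : k → ℝ) : ∃ y, A *ᵥ y = U *ᵥ v ∧ c * (y ⬝ᵥ y) ≤ v ⬝ᵥ v := by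
  have hd0 (j : k) : 0 < d j := hc.trans_le (hd j)
  set w : k → ℝ := fun j => v j / d j
  have hAy : A *ᵥ (Aᵀ *ᵥ (U *ᵥ w)) = U *ᵥ v := by
    rw [mulVec_mulVec, mulVec_mulVec, hUd, ← mulVec_mulVec]
    congr 1
    ext j
    simp [w, mulVec_diagonal, mul_div_cancel₀ _ (hd0 j).ne']
  refine ⟨_, hAy, ?_⟩
  rw [dotProduct_comm, dotProduct_mulVec, vecMul_transpose, hAy,
    mulVec_dotProduct_mulVec_of_transpose_mul_self hU, dotProduct, dotProduct, Finset.mul_sum]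
  refine Finset.sum_le_sum fun j _ => ?_
  calc c * (v j * w j) = v j ^ 2 * (c / d j) := by simp only [w]; field_simp
    _ ≤ v j ^ 2 * 1 := by gcongr; exact (div_le_one (hd0 j)).2 (hd j)
    _ = v j * v j := by ring

theorem one_sub_div_mul_le_of_residual_le (hU : Uᵀ * U = 1) (hX : Xᵀ * X = 1)
    {A : Matrix m n ℝ} {d : k → ℝ} (hUd : A * Aᵀ * U = U * diagonal d) {c ε : ℝ} (hc : 0 < c)
    (hd : ∀ j, c ≤ d j) (hε : 0 ≤ ε)
    (hres : ∀ y, ((A - X * Xᵀ * A) *ᵥ y) ⬝ᵥ ((A - X * Xᵀ * A) *ᵥ y) ≤ ε * (y ⬝ᵥ y))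
    (v : k → ℝ) : (1 - ε / c) * (v ⬝ᵥ v) ≤ ((Uᵀ * X)ᵀ *ᵥ v) ⬝ᵥ ((Uᵀ * X)ᵀ *ᵥ v) := by
  obtain ⟨y, hAy, hy⟩ := exists_preimage_of_mul_transpose_mul_eq_mul_diagonal hU hUd hc hd v
  have hsplit := dotProduct_self_eq_add_of_transpose_mul_self hX (U *ᵥ v)
  have hresidual : U *ᵥ v - X *ᵥ (Xᵀ *ᵥ (U *ᵥ v)) = (A - X * Xᵀ * A) *ᵥ y := by
    rw [sub_mulVec, hAy, ← mulVec_mulVec, ← mulVec_mulVec, hAy]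
  rw [hresidual, mulVec_dotProduct_mulVec_of_transpose_mul_self hU] at hsplit
  have hεy : ε * (y ⬝ᵥ y) ≤ ε / c * (v ⬝ᵥ v) := by
    rw [div_mul_eq_mul_div, le_div_iff₀ hc, mul_assoc, mul_comm (y ⬝ᵥ y)]
    exact mul_le_mul_of_nonneg_left hy hε
  rw [transpose_mul, transpose_transpose, ← mulVec_mulVec]
  linarith [hres y]

end OrthonormalColumns

end Matrix

namespace Matrix.IsHermitian

open Finset

variable {n : Type*} [Fintype n] [DecidableEq n] {B : Matrix n n ℝ}

theorem sum_dotProduct_eigenvectorBasis_smul (hB : B.IsHermitian) (x : n → ℝ) :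
    ∑ i, (⇑(hB.eigenvectorBasis i) ⬝ᵥ x) • ⇑(hB.eigenvectorBasis i) = x := by
  have := congrArg WithLp.ofLp (hB.eigenvectorBasis.sum_repr' (WithLp.toLp 2 x))
  simpa [EuclideanSpace.inner_eq_star_dotProduct, dotProduct_comm] using this

theorem dotProduct_self_eq_sum (hB : B.IsHermitian) (x : n → ℝ) :
    x ⬝ᵥ x = ∑ i, (⇑(hB.eigenvectorBasis i) ⬝ᵥ x) ^ 2 := by
  conv_lhs => arg 1; rw [← hB.sum_dotProduct_eigenvectorBasis_smul x]
  simp only [sum_dotProduct, smul_dotProduct, smul_eq_mul, sq]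

theorem dotProduct_mulVec_eq_sum (hB : B.IsHermitian) (x : n → ℝ) :
    x ⬝ᵥ (B *ᵥ x) = ∑ i, hB.eigenvalues i * (⇑(hB.eigenvectorBasis i) ⬝ᵥ x) ^ 2 := by
  conv_lhs => arg 2; rw [← hB.sum_dotProduct_eigenvectorBasis_smul x]
  simp only [mulVec_sum, mulVec_smul, hB.mulVec_eigenvectorBasis, dotProduct_sum,
    dotProduct_smul, smul_eq_mul]
  refine sum_congr rfl fun i _ => ?_
  rw [dotProduct_comm x]; ring

theorem le_dotProduct_mulVec (hB : B.IsHermitian) {t : ℝ} {x : n → ℝ}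
    (hx : ∀ i, hB.eigenvalues i < t → ⇑(hB.eigenvectorBasis i) ⬝ᵥ x = 0) :
    t * (x ⬝ᵥ x) ≤ x ⬝ᵥ (B *ᵥ x) := by
  rw [hB.dotProduct_self_eq_sum, hB.dotProduct_mulVec_eq_sum, mul_sum]
  refine sum_le_sum fun i _ => ?_
  by_cases hi : hB.eigenvalues i < t
  · simp [hx i hi]
  · exact mul_le_mul_of_nonneg_right (not_lt.1 hi) (sq_nonneg _)

theorem dotProduct_mulVec_lt (hB : B.IsHermitian) {t : ℝ} {x : n → ℝ} (hx0 : x ≠ 0)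
    (hx : ∀ i, t ≤ hB.eigenvalues i → ⇑(hB.eigenvectorBasis i) ⬝ᵥ x = 0) :
    x ⬝ᵥ (B *ᵥ x) < t * (x ⬝ᵥ x) := by
  obtain ⟨i, hi⟩ : ∃ i, ⇑(hB.eigenvectorBasis i) ⬝ᵥ x ≠ 0 := by
    by_contra! h
    exact hx0 (by simpa [h] using (hB.sum_dotProduct_eigenvectorBasis_smul x).symm)
  have hlt (j) (hj : ⇑(hB.eigenvectorBasis j) ⬝ᵥ x ≠ 0) : hB.eigenvalues j < t :=
    not_le.1 fun h => hj (hx j h)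
  rw [hB.dotProduct_self_eq_sum, hB.dotProduct_mulVec_eq_sum, mul_sum]
  refine sum_lt_sum (fun j _ => ?_) ⟨i, mem_univ _, ?_⟩
  · by_cases hj : ⇑(hB.eigenvectorBasis j) ⬝ᵥ x = 0
    · simp [hj]
    · exact mul_le_mul_of_nonneg_right (hlt j hj).le (sq_nonneg _)
  · exact mul_lt_mul_of_pos_right (hlt i hi) (by positivity)

theorem le_eigenvalues (hB : B.IsHermitian) {κ : ℝ}
    (h : ∀ x : n → ℝ, κ * (x ⬝ᵥ x) ≤ x ⬝ᵥ (B *ᵥ x)) (i : n) : κ ≤ hB.eigenvalues i := by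
  have hunit : ⇑(hB.eigenvectorBasis i) ⬝ᵥ ⇑(hB.eigenvectorBasis i) = 1 := by
    have h1 := orthonormal_iff_ite.1 hB.eigenvectorBasis.orthonormal i i
    rwa [if_pos rfl, EuclideanSpace.inner_eq_star_dotProduct, star_trivial] at h1
  simpa [hB.mulVec_eigenvectorBasis, hunit] using h (hB.eigenvectorBasis i)

theorem card_le_eigenvalues_le {B₁ B₂ : Matrix n n ℝ} (hB₁ : B₁.IsHermitian)
    (hB₂ : B₂.IsHermitian) (hle : ∀ x, x ⬝ᵥ (B₂ *ᵥ x) ≤ x ⬝ᵥ (B₁ *ᵥ x)) (t : ℝ) :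
    #{i | t ≤ hB₂.eigenvalues i} ≤ #{i | t ≤ hB₁.eigenvalues i} := by
  by_contra! hlt
  -- there are fewer eigenvectors of `B₂` below `t` and of `B₁` at or above `t` than coordinates,
  -- so some `x ≠ 0` is orthogonal to all of them, forcing `t ‖x‖² ≤ xᵀ B₂ x ≤ xᵀ B₁ x < t ‖x‖²`
  let w : {i // ¬ t ≤ hB₂.eigenvalues i} ⊕ {i // t ≤ hB₁.eigenvalues i} → n → ℝ :=
    Sum.elim (fun i => ⇑(hB₂.eigenvectorBasis i)) (fun i => ⇑(hB₁.eigenvectorBasis i))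
  have hcard : Fintype.card ({i // ¬ t ≤ hB₂.eigenvalues i} ⊕ {i // t ≤ hB₁.eigenvalues i})
      < Fintype.card n := by
    have := card_filter_add_card_filter_not (s := univ) (fun i => t ≤ hB₂.eigenvalues i)
    rw [Fintype.card_sum, Fintype.card_subtype, Fintype.card_subtype, ← card_univ]
    omega
  obtain ⟨x, hx0, hx⟩ := exists_ne_zero_forall_dotProduct_eq_zero w hcard
  have h₂ := hB₂.le_dotProduct_mulVec fun i hi => hx (.inl ⟨i, not_le.2 hi⟩)
  have h₁ := hB₁.dotProduct_mulVec_lt hx0 fun i hi => hx (.inr ⟨i, hi⟩)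
  linarith [hle x]

end Matrix.IsHermitian

section specNorm

variable {r s : ℕ}

theorem specNorm_nonneg (M : Matrix (Fin r) (Fin s) ℝ) : 0 ≤ specNorm M :=
  Real.sSup_nonneg fun _ ⟨_, _, hc⟩ => hc ▸ Real.sqrt_nonneg _

theorem sqrt_sum_sq_le_specNorm (M : Matrix (Fin r) (Fin s) ℝ) {x : Fin s → ℝ}
    (hx : ∑ j, x j ^ 2 = 1) : √(∑ i, (M *ᵥ x) i ^ 2) ≤ specNorm M := by
  refine le_csSup ⟨√(∑ i, ∑ j, M i j ^ 2), ?_⟩ ⟨x, hx, rfl⟩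
  rintro c ⟨y, hy, rfl⟩
  refine Real.sqrt_le_sqrt (Finset.sum_le_sum fun i _ => ?_)
  simpa [hy, mulVec, dotProduct] using
    Finset.sum_mul_sq_le_sq_mul_sq Finset.univ (fun j => M i j) y

theorem sqrt_sum_mulVec_sq_le_specNorm_mul (M : Matrix (Fin r) (Fin s) ℝ) (x : Fin s → ℝ) :
    √(∑ i, (M *ᵥ x) i ^ 2) ≤ specNorm M * √(∑ j, x j ^ 2) := by
  have hnorm {k : ℕ} (v : Fin k → ℝ) : √(∑ i, v i ^ 2) = ‖WithLp.toLp 2 v‖ := by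
    simp [EuclideanSpace.norm_eq]
  rcases eq_or_ne x 0 with rfl | hx
  · simp
  have hc : 0 < ‖WithLp.toLp 2 x‖ := norm_pos_iff.2 (by simpa using hx)
  have hunit := sqrt_sum_sq_le_specNorm M (x := ‖WithLp.toLp 2 x‖⁻¹ • x) (by
    rw [← Real.sqrt_eq_one, hnorm, WithLp.toLp_smul, norm_smul, norm_inv, norm_norm,
      inv_mul_cancel₀ hc.ne'])
  rw [mulVec_smul, hnorm, WithLp.toLp_smul, norm_smul, norm_inv, norm_norm, inv_mul_le_iff₀ hc,
    mul_comm] at hunit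
  rwa [hnorm, hnorm]

theorem mulVec_dotProduct_mulVec_le_specNorm_mul (D : Matrix (Fin r) (Fin s) ℝ)
    (y : Fin s → ℝ) : (D *ᵥ y) ⬝ᵥ (D *ᵥ y) ≤ specNorm (Dᵀ * D) * (y ⬝ᵥ y) := by
  have hdot (v : Fin s → ℝ) : v ⬝ᵥ v = √(∑ j, v j ^ 2) * √(∑ j, v j ^ 2) := by
    rw [Real.mul_self_sqrt (by positivity)]; simp [dotProduct, sq]
  calc (D *ᵥ y) ⬝ᵥ (D *ᵥ y) = ∑ j, y j * ((Dᵀ * D) *ᵥ y) j := by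
        rw [← dotProduct_transpose_mul_self_mulVec]; rfl
    _ ≤ √(∑ j, y j ^ 2) * √(∑ j, ((Dᵀ * D) *ᵥ y) j ^ 2) :=
        Real.sum_mul_le_sqrt_mul_sqrt _ _ _
    _ ≤ √(∑ j, y j ^ 2) * (specNorm (Dᵀ * D) * √(∑ j, y j ^ 2)) :=
        mul_le_mul_of_nonneg_left (sqrt_sum_mulVec_sq_le_specNorm_mul _ y) (Real.sqrt_nonneg _)
    _ = specNorm (Dᵀ * D) * (y ⬝ᵥ y) := by rw [hdot]; ring

end specNorm

namespace IsSingularValues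

open Finset

variable {r s : ℕ} {M : Matrix (Fin r) (Fin s) ℝ} {σ : ℕ → ℝ}

theorem card_le_sq_eq_card_le_eigenvalues (hσ : IsSingularValues M σ)
    (hH : (Mᵀ * M).IsHermitian) (t : ℝ) :
    #{i : Fin s | t ≤ σ i ^ 2} = #{i | t ≤ hH.eigenvalues i} := by
  have := congrArg (Multiset.countP (t ≤ ·)) (hσ.2.2.2 hH)
  rw [Multiset.countP_map, Multiset.countP_map] at this
  simpa only [card_def, filter_val] using this

theorem le_sq_iff (hσ : IsSingularValues M σ) {t : ℝ} (ht : 0 < t) (i : ℕ) :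
    t ≤ σ i ^ 2 ↔ i + 1 ≤ #{j : Fin s | t ≤ σ j ^ 2} := by
  obtain ⟨hanti, hnonneg, hzero, -⟩ := hσ
  have sq_le {j k : ℕ} (hjk : j ≤ k) : σ k ^ 2 ≤ σ j ^ 2 :=
    pow_le_pow_left₀ (hnonneg k) (hanti hjk) 2
  constructor
  · intro hi
    have his : i < s := by
      by_contra! his
      rw [hzero i his] at hi
      linarith
    calc i + 1 = #(Iic (⟨i, his⟩ : Fin s)) := (Fin.card_Iic (⟨i, his⟩ : Fin s)).symm
      _ ≤ #{j : Fin s | t ≤ σ j ^ 2} := card_le_card fun j hj => by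
          have hji : j ≤ ⟨i, his⟩ := Finset.mem_Iic.1 hj
          simp only [mem_filter, mem_univ, true_and]
          exact hi.trans (sq_le hji)
  · intro hcard
    by_contra! hi
    have : #{j : Fin s | t ≤ σ j ^ 2} ≤ #(range i) :=
      card_le_card_of_injOn (fun j => (j : ℕ)) (fun j hj => by
        simp only [coe_filter, mem_univ, true_and] at hj
        simp only [coe_range, Set.mem_Iio]
        by_contra! hij
        exact absurd (hj.trans (sq_le hij)) (not_le.2 hi))
        (fun j _ k _ hjk => Fin.ext hjk)
    rw [card_range] at this
    omega

theorem le_of_forall_mulVec_dotProduct_le {r' : ℕ} {D : Matrix (Fin r') (Fin s) ℝ} {τ : ℕ → ℝ}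
    (hσ : IsSingularValues M σ) (hτ : IsSingularValues D τ)
    (hle : ∀ x, (D *ᵥ x) ⬝ᵥ (D *ᵥ x) ≤ (M *ᵥ x) ⬝ᵥ (M *ᵥ x)) (i : ℕ) : τ i ≤ σ i := by
  rcases (hτ.2.1 i).eq_or_lt with h0 | hpos
  · exact h0 ▸ hσ.2.1 i
  have ht : 0 < τ i ^ 2 := by positivity
  have hM := isHermitian_transpose_mul_self M
  have hD := isHermitian_transpose_mul_self D
  have hcount : i + 1 ≤ #{j | τ i ^ 2 ≤ hD.eigenvalues j} :=
    hτ.card_le_sq_eq_card_le_eigenvalues hD _ ▸ (hτ.le_sq_iff ht i).1 le_rfl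
  have hmono := hM.card_le_eigenvalues_le hD
    (fun x => by simpa only [dotProduct_transpose_mul_self_mulVec] using hle x) (τ i ^ 2)
  have hsq := (hσ.le_sq_iff ht i).2
    (hσ.card_le_sq_eq_card_le_eigenvalues hM _ ▸ hcount.trans hmono)
  exact (pow_le_pow_iff_left₀ (hτ.2.1 i) (hσ.2.1 i) two_ne_zero).1 hsq

theorem le_sq_of_forall_le_mulVec_dotProduct (hσ : IsSingularValues M σ) {κ : ℝ}
    (hκ : ∀ x, κ * (x ⬝ᵥ x) ≤ (M *ᵥ x) ⬝ᵥ (M *ᵥ x)) {i : ℕ} (hi : i < s) :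
    κ ≤ σ i ^ 2 := by
  have hM := isHermitian_transpose_mul_self M
  have hmem : σ i ^ 2 ∈ Multiset.map hM.eigenvalues univ.val := by
    rw [← hσ.2.2.2 hM]
    exact Multiset.mem_map_of_mem _ (mem_univ_val (⟨i, hi⟩ : Fin s))
  obtain ⟨j, -, hj⟩ := Multiset.mem_map.1 hmem
  exact hj ▸ hM.le_eigenvalues
    (fun x => by simpa only [dotProduct_transpose_mul_self_mulVec] using hκ x) j

theorem transpose {M : Matrix (Fin s) (Fin s) ℝ} (hσ : IsSingularValues M σ) :
    IsSingularValues Mᵀ σ := by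
  refine ⟨hσ.1, hσ.2.1, hσ.2.2.1, fun hH => ?_⟩
  have hM := isHermitian_transpose_mul_self M
  have hcharpoly : (Mᵀᵀ * Mᵀ).charpoly = (Mᵀ * M).charpoly := by
    rw [transpose_transpose, charpoly_mul_comm]
  have := hH.roots_charpoly_eq_eigenvalues.symm.trans
    ((congrArg Polynomial.roots hcharpoly).trans hM.roots_charpoly_eq_eigenvalues)
  rw [hσ.2.2.2 hM]
  simpa using this.symm

end IsSingularValues

theorem sqrt_one_sub_sq_div_le {t ρ q : ℝ} (ht : 0 ≤ t) (hρ : 0 ≤ ρ) (hρ1 : ρ < 1) (hq : 1 ≤ q)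
    (hcos : 1 - ρ ^ 2 ≤ t ^ 2) : √(1 - t ^ 2) / t ≤ q * (ρ / (1 - ρ ^ 2)) := by
  have hκ : 0 < 1 - ρ ^ 2 := by nlinarith
  have hsin : √(1 - t ^ 2) ≤ ρ := Real.sqrt_le_iff.2 ⟨hρ, by linarith⟩
  have hcos' : 1 - ρ ^ 2 ≤ t := by nlinarith
  calc √(1 - t ^ 2) / t ≤ ρ / (1 - ρ ^ 2) := div_le_div₀ hρ hsin hκ hcos'
    _ ≤ q * (ρ / (1 - ρ ^ 2)) := le_mul_of_one_le_left (by positivity) hq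

/-- The columns of `U` and `Xt` are orthonormal bases of `X_LSI` and `X_opt`, so `τ` lists the
cosines of the canonical angles and `τ (h - 1)` is the cosine of the largest one. -/
theorem lsi_close_to_optimum {m n h : ℕ} (hh : 0 < h)
    (A : Matrix (Fin m) (Fin n) ℝ)
    (σ : ℕ → ℝ) (hσ : IsSingularValues A σ)
    (U : Matrix (Fin m) (Fin h) ℝ) (hU : Uᵀ * U = 1)
    (hUsv : A * Aᵀ * U = U * Matrix.diagonal (fun j : Fin h => σ (j : ℕ) ^ 2))
    (Xt : Matrix (Fin m) (Fin h) ℝ) (hXt : Xtᵀ * Xt = 1)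
    (Dh Db : Matrix (Fin m) (Fin n) ℝ)
    (hDh : Dh = Xt * Xtᵀ * A) (hDb : Db = A - Dh)
    (σh : ℕ → ℝ) (hσh : IsSingularValues Dh σh)
    (Δmax Δmin : ℝ) (hΔmax : Δmax = σh 0) (hΔmin : Δmin = σh (h - 1))
    (εh₀ : ℝ) (hεh₀ : εh₀ = specNorm (Dbᵀ * Db))
    (hgap : Real.sqrt εh₀ < Δmin) :
    ∀ τ : ℕ → ℝ, IsSingularValues (Uᵀ * Xt) τ →
      Real.sqrt (1 - τ (h - 1) ^ 2) / τ (h - 1) ≤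
        (Δmax / Δmin) *
          ((Real.sqrt εh₀ / Δmin) / (1 - (Real.sqrt εh₀ / Δmin) ^ 2)) := by
  intro τ hτ
  subst hDb hDh
  have hε : 0 ≤ εh₀ := hεh₀ ▸ specNorm_nonneg _
  have hΔ : 0 < Δmin := (Real.sqrt_nonneg _).trans_lt hgap
  have hσΔ : Δmin ≤ σ (h - 1) := hΔmin ▸ hσ.le_of_forall_mulVec_dotProduct_le hσh
    (mul_transpose_mul_mulVec_dotProduct_le hXt A) (h - 1)
  have hcos := one_sub_div_mul_le_of_residual_le hU hXt hUsv (c := Δmin ^ 2) (by positivity)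
    (fun j => pow_le_pow_left₀ hΔ.le (hσΔ.trans (hσ.1 (by omega))) 2) hε
    (fun y => hεh₀ ▸ mulVec_dotProduct_mulVec_le_specNorm_mul _ y)
  rw [← Real.sq_sqrt hε, ← div_pow] at hcos
  exact sqrt_one_sub_sq_div_le (hτ.2.1 _) (by positivity) ((div_lt_one hΔ).2 hgap)
    ((one_le_div hΔ).2 (hΔmax ▸ hΔmin ▸ hσh.1 (Nat.zero_le _)))
    (hτ.transpose.le_sq_of_forall_le_mulVec_dotProduct hcos (by omega))
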